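/- For all natural numbers n ≥ 1 and k ≥ 1, σ_k(B_n) ≤ B_{σ_k(n)}, with equality only if n = 1. Here σ_k(m) denotes the sum of the k-th powers of the divisors of m, and B is the balancing sequence. -/

import Mathlib

/-!
`B n` lies between `5 ^ (n - 1)` and `6 ^ (n - 1)`, and `B (n + t) ≥ 5 ^ t * B n`, while
`σ k m ≤ m ^ (k + 1)` and `σ 1 m ≤ m (1 + log m)`. For `k ≥ 2` the index `σ k n ≥ n ^ k + 1` is so
large that these crude bounds suffice. For `k = 1` and composite `n`, `σ 1 n ≥ n + √n + 1` gains a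
factor `5 ^ (√n + 1)`, which beats `1 + log (B n) < 3 n`. For a prime `p` only the factor
`B (p + 1) / B p ≥ 5` is available, so one needs `σ 1 (B p) < 5 B p`. With `α = 3 + √8` one has
`B n (α - α⁻¹) = α ^ n - α⁻¹ ^ n`, and in characteristic `q` Frobenius permutes `{α, α⁻¹}`, so
`α ^ (q ^ 2 - 1) = 1`; hence every prime `q ∣ B p` satisfies `p ∣ q ^ 2 - 1`, i.e. `q ≥ 2p - 1`.
Then `B p ≤ 6 ^ (p - 1)` has fewer than `p` prime factors and
`σ 1 (B p) / B p ≤ (1 + 1 / (2p - 2)) ^ (p - 1) < e`.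
-/

def B : ℕ → ℕ
  | 0 => 0
  | 1 => 1
  | (n + 2) => 6 * B (n + 1) - B n

open ArithmeticFunction Finset
open scoped ArithmeticFunction.sigma

theorem B_lt_B_succ : ∀ n, B n < B (n + 1)
  | 0 => by decide
  | 1 => by decide
  | n + 2 => by
    have h : B (n + 1) < B (n + 2) := B_lt_B_succ (n + 1)
    have e : B (n + 2 + 1) = 6 * B (n + 2) - B (n + 1) := rfl
    omega

theorem strictMono_B : StrictMono B := strictMono_nat_of_lt_succ B_lt_B_succ

theorem B_pos {n : ℕ} (hn : n ≠ 0) : 0 < B n :=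
  (Nat.zero_le _).trans_lt (strictMono_B (Nat.pos_of_ne_zero hn))

theorem B_add_two_add (n : ℕ) : B (n + 2) + B n = 6 * B (n + 1) := by
  have := B_lt_B_succ n
  have e : B (n + 2) = 6 * B (n + 1) - B n := rfl
  omega

theorem five_mul_B_le : ∀ n, 5 * B n ≤ B (n + 1)
  | 0 => by decide
  | n + 1 => by
    have := B_add_two_add n
    have := B_lt_B_succ n
    rw [show n + 1 + 1 = n + 2 from rfl]
    omega

theorem five_pow_mul_B_le (n t : ℕ) : 5 ^ t * B n ≤ B (n + t) := by
  induction t with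
  | zero => simp
  | succ t ih =>
    calc 5 ^ (t + 1) * B n = 5 * (5 ^ t * B n) := by ring
      _ ≤ 5 * B (n + t) := by gcongr
      _ ≤ B (n + (t + 1)) := five_mul_B_le (n + t)

theorem B_le_six_pow : ∀ n, B n ≤ 6 ^ (n - 1)
  | 0 => by decide
  | 1 => by decide
  | n + 2 => by
    have h : B (n + 1) ≤ 6 ^ n := B_le_six_pow (n + 1)
    have := B_add_two_add n
    rw [show n + 2 - 1 = n + 1 from rfl, pow_succ]
    omega

theorem B_mod_two : ∀ n, B n % 2 = n % 2
  | 0 => rfl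
  | 1 => rfl
  | n + 2 => by
    have := B_add_two_add n
    have := B_mod_two n
    omega

theorem B_mul_sub_eq {R : Type*} [CommRing R] {α β : R} (hsum : α + β = 6) (hprod : α * β = 1) :
    ∀ n, (B n : R) * (α - β) = α ^ n - β ^ n
  | 0 => by simp [B]
  | 1 => by simp [B]
  | n + 2 => by
    have h := congrArg (Nat.cast : ℕ → R) (B_add_two_add n)
    push_cast at h
    have ih₀ := B_mul_sub_eq hsum hprod n
    have ih₁ := B_mul_sub_eq hsum hprod (n + 1)
    linear_combination (α - β) * h + 6 * ih₁ - ih₀ - (α ^ (n + 1) - β ^ (n + 1)) * hsum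
      + (α ^ n - β ^ n) * hprod

theorem pow_add_one_le_sigma {n : ℕ} (hn : 2 ≤ n) (k : ℕ) : n ^ k + 1 ≤ σ k n := by
  have hsub : ({1, n} : Finset ℕ) ⊆ n.divisors := by
    simp [insert_subset_iff]; omega
  calc n ^ k + 1 = ∑ d ∈ {1, n}, d ^ k := by
        rw [sum_pair (by omega)]; simp [add_comm]
    _ ≤ σ k n := by rw [sigma_apply]; exact sum_le_sum_of_subset hsub

theorem add_sqrt_add_one_le_sigma_one {n : ℕ} (hn : 2 ≤ n) (hnp : ¬ n.Prime) :
    n + n.sqrt + 1 ≤ σ 1 n := by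
  have hminFac : n.minFac ^ 2 ≤ n := Nat.minFac_sq_le_self (by omega) hnp
  have hpos : 0 < n.minFac := n.minFac_pos
  set d := n / n.minFac
  have hd_dvd : d ∣ n := Nat.div_dvd_of_dvd n.minFac_dvd
  have hsqrt_le : n.sqrt ≤ d := by
    rw [Nat.le_div_iff_mul_le hpos]
    calc n.sqrt * n.minFac ≤ n.sqrt * n.sqrt := by gcongr; exact Nat.le_sqrt'.mpr hminFac
      _ ≤ n := Nat.sqrt_le n
  have hd_lt : d < n := Nat.div_lt_self (by omega) (Nat.minFac_prime (by omega)).one_lt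
  have h4 : 2 ^ 2 ≤ n :=
    (Nat.pow_le_pow_left (Nat.minFac_prime (by omega)).two_le 2).trans hminFac
  have hd_one : 1 < d := by
    have := Nat.le_sqrt'.mpr h4
    omega
  have hsub : ({1, d, n} : Finset ℕ) ⊆ n.divisors := by
    simp [insert_subset_iff, hd_dvd]; omega
  calc n + n.sqrt + 1 ≤ ∑ x ∈ {1, d, n}, x := by
        rw [sum_insert (by simp; omega), sum_pair (by omega)]; omega
    _ ≤ σ 1 n := by rw [sigma_one_apply]; exact sum_le_sum_of_subset hsub

theorem sigma_one_le_mul_harmonic (m : ℕ) : (σ 1 m : ℚ) ≤ m * harmonic m := by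
  rw [sigma_one_apply, ← Nat.sum_div_divisors, harmonic_eq_sum_Icc, mul_sum]
  push_cast
  calc ∑ d ∈ m.divisors, ((m / d : ℕ) : ℚ) = ∑ d ∈ m.divisors, (m : ℚ) * (d : ℚ)⁻¹ := by
        refine sum_congr rfl fun d hd => ?_
        rw [Nat.cast_div (Nat.dvd_of_mem_divisors hd)
          (by exact_mod_cast (Nat.pos_of_mem_divisors hd).ne'), div_eq_mul_inv]
    _ ≤ ∑ d ∈ Icc 1 m, (m : ℚ) * (d : ℚ)⁻¹ := by
        refine sum_le_sum_of_subset_of_nonneg (fun d hd => ?_) fun _ _ _ => by positivity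
        exact mem_Icc.mpr ⟨Nat.pos_of_mem_divisors hd, Nat.divisor_le hd⟩

theorem sigma_one_prime_pow_mul_le {q L : ℕ} (hq : q.Prime) (hLq : L ≤ q) (e : ℕ) :
    σ 1 (q ^ e) * (L - 1) ≤ q ^ e * L := by
  obtain rfl | hL := Nat.eq_zero_or_pos L
  · simp
  have hgeom : ((σ 1 (q ^ e) : ℕ) : ℤ) * (q - 1) = q ^ e * q - 1 := by
    rw [sigma_one_apply_prime_pow hq, ← pow_succ]; push_cast; exact geom_sum_mul _ _
  have hσ : (0 : ℤ) ≤ σ 1 (q ^ e) := by positivity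
  have hLq' : (L : ℤ) ≤ q := by exact_mod_cast hLq
  refine Nat.le_of_mul_le_mul_left ?_ hq.pos
  zify [hL]
  nlinarith [mul_nonneg hσ (sub_nonneg.2 hLq')]

theorem sigma_one_mul_pow_le {m L : ℕ} (hL : ∀ q ∈ m.primeFactors, L ≤ q) :
    σ 1 m * (L - 1) ^ #m.primeFactors ≤ m * L ^ #m.primeFactors := by
  obtain rfl | hm := eq_or_ne m 0
  · simp
  have hσ : σ 1 m = ∏ q ∈ m.primeFactors, σ 1 (q ^ m.factorization q) := by
    rw [isMultiplicative_sigma.multiplicative_factorization (σ 1) hm, Finsupp.prod,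
      Nat.support_factorization]
  have hm' : m = ∏ q ∈ m.primeFactors, q ^ m.factorization q := by
    conv_lhs => rw [← Nat.prod_factorization_pow_eq_self hm]
    rw [Finsupp.prod, Nat.support_factorization]
  calc σ 1 m * (L - 1) ^ #m.primeFactors
      = ∏ q ∈ m.primeFactors, σ 1 (q ^ m.factorization q) * (L - 1) := by
        rw [hσ, prod_mul_distrib, prod_const]
    _ ≤ ∏ q ∈ m.primeFactors, q ^ m.factorization q * L :=
        prod_le_prod' fun q hq =>
          sigma_one_prime_pow_mul_le (Nat.prime_of_mem_primeFactors hq) (hL q hq) _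
    _ = m * L ^ #m.primeFactors := by
        rw [prod_mul_distrib, prod_const, ← hm']

theorem pow_sq_sub_one_eq_one {K : Type*} [Field K] {q : ℕ} [Fact q.Prime] [CharP K q]
    {α β : K} (hsum : α + β = 6) (hprod : α * β = 1) : α ^ (q ^ 2 - 1) = 1 := by
  have hα : α ^ 2 + 1 = 6 * α := by linear_combination α * hsum - hprod
  have hfrob : (α ^ q) ^ 2 + 1 = 6 * α ^ q := by
    have h := congrArg (frobenius K q) hα
    simp only [map_add, map_mul, map_pow, map_one, map_ofNat, frobenius_def] at h
    linear_combination h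
  -- `α ^ q` is again a root of `X ^ 2 - 6 X + 1 = (X - α) (X - β)`.
  have hroots : (α ^ q - α) * (α ^ q - β) = 0 := by
    linear_combination hfrob - (α ^ q) * hsum + hprod
  have hq := (Fact.out : q.Prime).one_lt
  have hsq : q ^ 2 - 1 = (q - 1) * (q + 1) := by
    rw [mul_comm, ← Nat.sq_sub_sq, one_pow]
  rcases mul_eq_zero.mp hroots with h | h
  · have h1 : α ^ (q - 1) = 1 := by
      have hα0 : α ≠ 0 := left_ne_zero_of_mul_eq_one hprod
      refine mul_right_cancel₀ hα0 ?_
      rw [← pow_succ, Nat.sub_add_cancel hq.le, one_mul]; linear_combination h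
    rw [hsq, pow_mul, h1, one_pow]
  · have h1 : α ^ (q + 1) = 1 := by
      rw [pow_succ]; linear_combination α * h + hprod
    rw [hsq, mul_comm, pow_mul, h1, one_pow]

theorem prime_dvd_sq_sub_one_of_dvd_B {p q : ℕ} (hp : p.Prime) (hq : q.Prime) (hq2 : q ≠ 2)
    (hdvd : q ∣ B p) : p ∣ q ^ 2 - 1 := by
  have := Fact.mk hq
  obtain ⟨s, hs⟩ := IsAlgClosed.exists_eq_mul_self (8 : AlgebraicClosure (ZMod q))
  have hsum : (3 + s) + (3 - s) = 6 := by ring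
  have hprod : (3 + s) * (3 - s) = 1 := by linear_combination hs
  have h2p : (3 + s) ^ (2 * p) = 1 := by
    have h := B_mul_sub_eq hsum hprod p
    rw [(CharP.cast_eq_zero_iff _ q _).mpr hdvd, zero_mul] at h
    calc (3 + s) ^ (2 * p) = (3 + s) ^ p * (3 + s) ^ p := by ring
      _ = ((3 + s) * (3 - s)) ^ p := by rw [mul_pow]; linear_combination (-(3 + s) ^ p) * h
      _ = 1 := by rw [hprod, one_pow]
  have hsq : ¬ (3 + s) ^ 2 = 1 := by
    intro h
    have h32 : ((2 ^ 5 : ℕ) : AlgebraicClosure (ZMod q)) = 0 := by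
      push_cast; linear_combination (-(16 - 6 * s)) * h + (36 - (16 - 6 * s)) * hs
    exact hq2 ((Nat.prime_dvd_prime_iff_eq hq Nat.prime_two).mp
      (hq.dvd_of_dvd_pow ((CharP.cast_eq_zero_iff _ q _).mp h32)))
  have hpord : p ∣ orderOf (3 + s) := by
    by_contra hnd
    have h2 : orderOf (3 + s) ∣ 2 :=
      ((hp.coprime_iff_not_dvd.mpr hnd).symm).dvd_of_dvd_mul_right (orderOf_dvd_of_pow_eq_one h2p)
    exact hsq (orderOf_dvd_iff_pow_eq_one.mp h2)
  exact hpord.trans (orderOf_dvd_of_pow_eq_one (pow_sq_sub_one_eq_one hsum hprod))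

theorem two_mul_sub_one_le_of_dvd_B {p q : ℕ} (hp : p.Prime) (hp2 : p ≠ 2) (hq : q.Prime)
    (hdvd : q ∣ B p) : 2 * p - 1 ≤ q := by
  have hp_odd : p % 2 = 1 := hp.eq_two_or_odd.resolve_left hp2
  have hq2 : q ≠ 2 := by
    rintro rfl
    have := B_mod_two p
    omega
  have hq_odd : q % 2 = 1 := hq.eq_two_or_odd.resolve_left hq2
  have hcop : Nat.Coprime p 2 := (Nat.coprime_primes hp Nat.prime_two).mpr hp2
  have hq1 := hq.one_lt
  have hpq : p ∣ (q - 1) * (q + 1) := by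
    rw [mul_comm, ← Nat.sq_sub_sq, one_pow]
    exact prime_dvd_sq_sub_one_of_dvd_B hp hq hq2 hdvd
  -- `q ∓ 1` is even and divisible by the odd prime `p`, hence by `2 p`.
  rcases (Nat.Prime.dvd_mul hp).mp hpq with h | h <;>
  · have := Nat.le_of_dvd (by omega) (hcop.mul_dvd_of_dvd_of_dvd h (by omega))
    omega

theorem add_one_pow_le_three_mul_pow {N w : ℕ} (hw : w ≤ N) : (N + 1) ^ w ≤ 3 * N ^ w := by
  obtain rfl | hN := Nat.eq_zero_or_pos N
  · simp_all
  have hN' : (0 : ℝ) < N := by exact_mod_cast hN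
  have key : ((N + 1 : ℕ) : ℝ) ^ w ≤ Real.exp 1 * N ^ w := by
    calc ((N + 1 : ℕ) : ℝ) ^ w = (1 / N + 1) ^ w * N ^ w := by
          rw [← mul_pow]; field_simp; push_cast; ring
      _ ≤ Real.exp (1 / N) ^ w * N ^ w := by gcongr; exact Real.add_one_le_exp _
      _ = Real.exp (w / N) * N ^ w := by rw [← Real.exp_nat_mul]; ring_nf
      _ ≤ Real.exp 1 * N ^ w := by
          gcongr; rw [div_le_one hN']; exact_mod_cast hw
  have h3 : Real.exp 1 < 3 := lt_trans Real.exp_one_lt_d9 (by norm_num)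
  have : ((N + 1 : ℕ) : ℝ) ^ w ≤ 3 * N ^ w := key.trans (by gcongr)
  exact_mod_cast this

theorem sigma_one_B_le_three_mul {p : ℕ} (hp : p.Prime) (hp5 : 5 ≤ p) :
    σ 1 (B p) ≤ 3 * B p := by
  set m := B p
  have hm : 0 < m := B_pos hp.ne_zero
  have hL : ∀ q ∈ m.primeFactors, (2 * p - 2) + 1 ≤ q := fun q hq => by
    have := two_mul_sub_one_le_of_dvd_B hp (by omega) (Nat.prime_of_mem_primeFactors hq)
      (Nat.dvd_of_mem_primeFactors hq)
    omega
  have hw : #m.primeFactors ≤ 2 * p - 2 := by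
    have h : (2 * p - 1) ^ #m.primeFactors ≤ (2 * p - 1) ^ (p - 1) :=
      calc (2 * p - 1) ^ #m.primeFactors ≤ ∏ q ∈ m.primeFactors, q := by
            rw [← prod_const]; exact prod_le_prod' fun q hq => by have := hL q hq; omega
        _ ≤ m := Nat.le_of_dvd hm (Nat.prod_primeFactors_dvd m)
        _ ≤ 6 ^ (p - 1) := B_le_six_pow p
        _ ≤ (2 * p - 1) ^ (p - 1) := by gcongr; omega
    have := (Nat.pow_le_pow_iff_right (by omega)).mp h
    omega
  have hσ := sigma_one_mul_pow_le hL
  rw [Nat.add_sub_cancel] at hσ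
  have hpos : 0 < (2 * p - 2) ^ #m.primeFactors := pow_pos (by omega) _
  have := add_one_pow_le_three_mul_pow hw
  refine Nat.le_of_mul_le_mul_right (hσ.trans ?_) hpos
  calc m * (2 * p - 2 + 1) ^ #m.primeFactors ≤ m * (3 * (2 * p - 2) ^ #m.primeFactors) := by
        gcongr
    _ = 3 * m * (2 * p - 2) ^ #m.primeFactors := by ring

theorem sigma_one_B_lt_B_sigma_one_of_prime {p : ℕ} (hp : p.Prime) :
    σ 1 (B p) < B (σ 1 p) := by
  rw [sigma_one_apply p, hp.sum_divisors]
  rcases Nat.lt_or_ge p 5 with hp5 | hp5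
  · interval_cases p <;> decide
  · have := B_pos hp.ne_zero
    calc σ 1 (B p) ≤ 3 * B p := sigma_one_B_le_three_mul hp hp5
      _ < 5 * B p := by omega
      _ ≤ B (p + 1) := five_mul_B_le p

theorem log_B_le {n : ℕ} (hn : n ≠ 0) : Real.log (B n) ≤ 3 * (n - 1) := by
  have hlog6 : Real.log 6 ≤ 3 := by
    rw [Real.log_le_iff_le_exp (by norm_num)]
    linarith [Real.quadratic_le_exp_of_nonneg (x := 3) (by norm_num)]
  have hB : (0 : ℝ) < B n := by exact_mod_cast B_pos hn
  calc Real.log (B n) ≤ Real.log (6 ^ (n - 1) : ℕ) := by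
        gcongr; exact_mod_cast B_le_six_pow n
    _ = (n - 1 : ℕ) * Real.log 6 := by push_cast; rw [Real.log_pow]
    _ ≤ (n - 1 : ℕ) * 3 := by gcongr
    _ = 3 * (n - 1) := by rw [Nat.cast_sub (Nat.one_le_iff_ne_zero.mpr hn)]; push_cast; ring

theorem sigma_one_B_lt_mul {n : ℕ} (hn : n ≠ 0) : σ 1 (B n) < 3 * n * B n := by
  have hB : (0 : ℝ) < B n := by exact_mod_cast B_pos hn
  have hH : (harmonic (B n) : ℝ) < 3 * n :=
    calc (harmonic (B n) : ℝ) ≤ 1 + Real.log (B n) := harmonic_le_one_add_log _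
      _ ≤ 1 + 3 * (n - 1) := by linarith [log_B_le hn]
      _ < 3 * n := by linarith
  have hσ : (σ 1 (B n) : ℝ) ≤ B n * harmonic (B n) := by
    exact_mod_cast sigma_one_le_mul_harmonic (B n)
  have : (σ 1 (B n) : ℝ) < 3 * n * B n := by nlinarith
  exact_mod_cast this

theorem three_mul_sq_le_five_pow {t : ℕ} (ht : 1 ≤ t) : 3 * t ^ 2 ≤ 5 ^ t := by
  induction t, ht using Nat.le_induction with
  | base => norm_num
  | succ t ht ih =>
    calc 3 * (t + 1) ^ 2 ≤ 5 * (3 * t ^ 2) := by nlinarith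
      _ ≤ 5 * 5 ^ t := Nat.mul_le_mul_left 5 ih
      _ = 5 ^ (t + 1) := (pow_succ' 5 t).symm

theorem sigma_one_B_lt_B_sigma_one_of_not_prime {n : ℕ} (hn : 2 ≤ n) (hnp : ¬ n.Prime) :
    σ 1 (B n) < B (σ 1 n) := by
  have hsqrt : n < (n.sqrt + 1) ^ 2 := by rw [sq]; exact Nat.lt_succ_sqrt n
  have h5 : 3 * n ≤ 5 ^ (n.sqrt + 1) :=
    le_trans (by omega) (three_mul_sq_le_five_pow (Nat.le_add_left 1 n.sqrt))
  calc σ 1 (B n) < 3 * n * B n := sigma_one_B_lt_mul (by omega)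
    _ ≤ 5 ^ (n.sqrt + 1) * B n := Nat.mul_le_mul_right _ h5
    _ ≤ B (n + (n.sqrt + 1)) := five_pow_mul_B_le n _
    _ ≤ B (σ 1 n) := strictMono_B.monotone (by linarith [add_sqrt_add_one_le_sigma_one hn hnp])

theorem four_mul_le_three_mul_pow {n k : ℕ} (hn : 2 ≤ n) (hk : 2 ≤ k) :
    4 * ((n - 1) * (k + 1)) ≤ 3 * n ^ k := by
  induction k, hk using Nat.le_induction with
  | base =>
    obtain ⟨c, rfl⟩ : ∃ c, n = c + 2 := ⟨n - 2, by omega⟩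
    rw [show c + 2 - 1 = c + 1 by omega]; ring_nf; nlinarith
  | succ k hk ih =>
    calc 4 * ((n - 1) * (k + 1 + 1)) ≤ 2 * (4 * ((n - 1) * (k + 1))) := by nlinarith
      _ ≤ 2 * (3 * n ^ k) := by gcongr
      _ ≤ 3 * n ^ (k + 1) := by rw [pow_succ]; nlinarith [Nat.mul_le_mul_left (3 * n ^ k) hn]

theorem six_pow_lt_five_pow {n k : ℕ} (hn : 2 ≤ n) (hk : 2 ≤ k) :
    6 ^ ((n - 1) * (k + 1)) < 5 ^ n ^ k := by
  have hx : (n - 1) * (k + 1) ≠ 0 := Nat.mul_ne_zero (by omega) (by omega)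
  refine (Nat.pow_lt_pow_iff_left (n := 3) (by norm_num)).mp ?_
  calc (6 ^ ((n - 1) * (k + 1))) ^ 3 = 216 ^ ((n - 1) * (k + 1)) := by
        rw [← pow_mul, mul_comm, pow_mul]; norm_num
    _ < 625 ^ ((n - 1) * (k + 1)) := Nat.pow_lt_pow_left (by norm_num) hx
    _ = 5 ^ (4 * ((n - 1) * (k + 1))) := by rw [pow_mul 5 4]; norm_num
    _ ≤ 5 ^ (3 * n ^ k) := Nat.pow_le_pow_right (by norm_num) (four_mul_le_three_mul_pow hn hk)
    _ = (5 ^ n ^ k) ^ 3 := by rw [← pow_mul, mul_comm]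

theorem sigma_B_lt_B_sigma_of_two_le {n k : ℕ} (hn : 2 ≤ n) (hk : 2 ≤ k) :
    σ k (B n) < B (σ k n) :=
  calc σ k (B n) ≤ B n ^ (k + 1) := sigma_le_pow_succ k _
    _ ≤ (6 ^ (n - 1)) ^ (k + 1) := by gcongr; exact B_le_six_pow n
    _ = 6 ^ ((n - 1) * (k + 1)) := (pow_mul _ _ _).symm
    _ < 5 ^ n ^ k := six_pow_lt_five_pow hn hk
    _ ≤ B (1 + n ^ k) := by simpa [show B 1 = 1 from rfl] using five_pow_mul_B_le 1 (n ^ k)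
    _ ≤ B (σ k n) := strictMono_B.monotone (by linarith [pow_add_one_le_sigma hn k])

theorem sigma_B_lt_B_sigma {n k : ℕ} (hn : 2 ≤ n) (hk : 1 ≤ k) : σ k (B n) < B (σ k n) := by
  obtain rfl | hk := hk.eq_or_lt
  · by_cases hp : n.Prime
    · exact sigma_one_B_lt_B_sigma_one_of_prime hp
    · exact sigma_one_B_lt_B_sigma_one_of_not_prime hn hp
  · exact sigma_B_lt_B_sigma_of_two_le hn hk

theorem stmt15 : ∀ n k : ℕ, 1 ≤ n → 1 ≤ k →
    ArithmeticFunction.sigma k (B n) ≤ B (ArithmeticFunction.sigma k n) ∧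
    (ArithmeticFunction.sigma k (B n) = B (ArithmeticFunction.sigma k n) → n = 1) := by
  intro n k hn hk
  obtain rfl | hn := hn.eq_or_lt
  · simp [B]
  · have h := sigma_B_lt_B_sigma hn hk
    exact ⟨h.le, fun heq => absurd heq h.ne⟩
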